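/- Let f be a bicritical rational map on the Riemann sphere of degree d, and suppose μ is a Möbius transformation such that μ(V_f) = V_f. Then there exists a Möbius transformation φ such that f ∘ φ = μ ∘ f and φ(C_f) = C_f. In particular, if μ ∈ Deck(f^k) for some k ≥ 1, then φ ∈ Deck(f^{k+1}). -/

import Mathlib

open Polynomial OnePoint Function

noncomputable section

abbrev RSphere : Type := OnePoint ℂ

namespace RSphere

def mApply (a b c d : ℂ) : RSphere → RSphere := fun z =>
  match z with
  | ∞ => if c = 0 then ∞ else ((a / c : ℂ) : RSphere)
  | (x : ℂ) => if c * x + d = 0 then ∞ else (((a * x + b) / (c * x + d) : ℂ) : RSphere)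

@[simp] lemma mApply_infty (a b c d : ℂ) :
    mApply a b c d ∞ = if c = 0 then ∞ else ((a / c : ℂ) : RSphere) := rfl

@[simp] lemma mApply_coe (a b c d : ℂ) (x : ℂ) :
    mApply a b c d (x : RSphere) =
      if c * x + d = 0 then ∞ else (((a * x + b) / (c * x + d) : ℂ) : RSphere) := rfl

def IsMobius (g : RSphere → RSphere) : Prop :=
  ∃ a b c d : ℂ, a * d - b * c ≠ 0 ∧ g = mApply a b c d

lemma mApply_diag {t : ℂ} (ht : t ≠ 0) : mApply t 0 0 t = id := by
  funext z
  induction z using OnePoint.rec with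
  | infty => simp
  | coe x => simp [ht]

theorem mApply_comp (a b c d a' b' c' d' : ℂ) (h' : a' * d' - b' * c' ≠ 0) :
    mApply a b c d ∘ mApply a' b' c' d' =
      mApply (a * a' + b * c') (a * b' + b * d') (c * a' + d * c') (c * b' + d * d') := by
  funext z
  induction z using OnePoint.rec with
  | infty =>
    simp only [comp_apply, mApply_infty]
    rcases eq_or_ne c' 0 with hc' | hc'
    · have ha' : a' ≠ 0 := fun h => h' (by rw [hc', h]; ring)
      rw [if_pos hc', mApply_infty, hc']
      simp only [mul_zero, add_zero]
      rcases eq_or_ne c 0 with hc | hc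
      · rw [if_pos hc, hc, zero_mul, if_pos rfl]
      · rw [if_neg hc, if_neg (mul_ne_zero hc ha'), mul_div_mul_right _ _ ha']
    · rw [if_neg hc', mApply_coe]
      have hd : c * (a' / c') + d = (c * a' + d * c') / c' := by field_simp
      rcases eq_or_ne (c * a' + d * c') 0 with h2 | h2
      · rw [if_pos (by rw [hd, h2, zero_div]), if_pos h2]
      · rw [if_neg (by rw [hd]; exact div_ne_zero h2 hc'), if_neg h2]
        congr 1
        rw [div_eq_div_iff (by rw [hd]; exact div_ne_zero h2 hc') h2]
        field_simp
        try ring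
  | coe x =>
    simp only [comp_apply, mApply_coe]
    have key2 : (c * a' + d * c') * x + (c * b' + d * d') =
        c * (a' * x + b') + d * (c' * x + d') := by ring
    have key1 : (a * a' + b * c') * x + (a * b' + b * d') =
        a * (a' * x + b') + b * (c' * x + d') := by ring
    rcases eq_or_ne (c' * x + d') 0 with h0 | h0
    · have hne : a' * x + b' ≠ 0 := by
        intro h
        apply h'
        have hh : a' * (c' * x + d') - c' * (a' * x + b') = a' * d' - b' * c' := by ring
        rw [← hh, h0, h, mul_zero, mul_zero, sub_zero]
      rw [if_pos h0, mApply_infty]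
      rw [show (c * a' + d * c') * x + (c * b' + d * d') = c * (a' * x + b') by
        rw [key2, h0, mul_zero, add_zero]]
      rw [show (a * a' + b * c') * x + (a * b' + b * d') = a * (a' * x + b') by
        rw [key1, h0, mul_zero, add_zero]]
      rcases eq_or_ne c 0 with hc | hc
      · rw [if_pos hc, if_pos (by rw [hc, zero_mul])]
      · rw [if_neg hc, if_neg (mul_ne_zero hc hne), mul_div_mul_right _ _ hne]
    · rw [if_neg h0, mApply_coe]
      have hw : c * ((a' * x + b') / (c' * x + d')) + d =
          ((c * a' + d * c') * x + (c * b' + d * d')) / (c' * x + d') := by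
        rw [eq_div_iff h0, add_mul, mul_assoc, div_mul_cancel₀ _ h0]; ring
      have ha : a * ((a' * x + b') / (c' * x + d')) + b =
          ((a * a' + b * c') * x + (a * b' + b * d')) / (c' * x + d') := by
        rw [eq_div_iff h0, add_mul, mul_assoc, div_mul_cancel₀ _ h0]; ring
      rcases eq_or_ne ((c * a' + d * c') * x + (c * b' + d * d')) 0 with h2 | h2
      · rw [if_pos (by rw [hw, h2, zero_div]), if_pos h2]
      · rw [if_neg (by rw [hw]; exact div_ne_zero h2 h0), if_neg h2]
        congr 1
        rw [hw, ha, div_div_div_cancel_right₀ h0]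

end RSphere

namespace RSphere

lemma IsMobius.id' : IsMobius (id : RSphere → RSphere) :=
  ⟨1, 0, 0, 1, by norm_num, (mApply_diag one_ne_zero).symm⟩

lemma IsMobius.comp {g h : RSphere → RSphere} (hg : IsMobius g) (hh : IsMobius h) :
    IsMobius (g ∘ h) := by
  obtain ⟨a, b, c, d, hdet, rfl⟩ := hg
  obtain ⟨a', b', c', d', hdet', rfl⟩ := hh
  refine ⟨_, _, _, _, ?_, mApply_comp a b c d a' b' c' d' hdet'⟩
  have key : (a * a' + b * c') * (c * b' + d * d') - (a * b' + b * d') * (c * a' + d * c')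
      = (a * d - b * c) * (a' * d' - b' * c') := by ring
  rw [key]
  exact mul_ne_zero hdet hdet'

lemma mApply_inv_comp {a b c d : ℂ} (h : a * d - b * c ≠ 0) :
    mApply d (-b) (-c) a ∘ mApply a b c d = id := by
  rw [mApply_comp d (-b) (-c) a a b c d h]
  rw [show d * a + -b * c = a * d - b * c by ring, show d * b + -b * d = 0 by ring,
    show -c * a + a * c = 0 by ring, show -c * b + a * d = a * d - b * c by ring]
  exact mApply_diag h

/-- The deck group of a map `F` of the Riemann sphere: the group of all Möbius
transformations `μ` with `F ∘ μ = F`, as a subgroup of the permutations of the sphere. -/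
def deckGroup (F : RSphere → RSphere) : Subgroup (Equiv.Perm RSphere) where
  carrier := {σ | IsMobius ⇑σ ∧ F ∘ ⇑σ = F}
  one_mem' := ⟨by rw [Equiv.Perm.coe_one]; exact IsMobius.id', by rw [Equiv.Perm.coe_one, Function.comp_id]⟩
  mul_mem' := by
    intro σ τ hσ hτ
    refine ⟨?_, ?_⟩
    · rw [Equiv.Perm.coe_mul]; exact hσ.1.comp hτ.1
    · rw [Equiv.Perm.coe_mul, ← Function.comp_assoc, hσ.2, hτ.2]
  inv_mem' := by
    intro σ hσ
    obtain ⟨⟨a, b, c, d, hdet, hg⟩, hF⟩ := hσ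
    have hinv : ⇑σ⁻¹ = mApply d (-b) (-c) a := by
      funext x
      have h1 : mApply d (-b) (-c) a ∘ ⇑σ = id := by rw [hg]; exact mApply_inv_comp hdet
      have h2 := congrFun h1 (σ⁻¹ x)
      simp only [comp_apply, show σ (σ⁻¹ x) = x from σ.apply_symm_apply x, id_eq] at h2
      exact h2.symm
    constructor
    · exact ⟨d, -b, -c, a, by rw [show d * a - -b * -c = a * d - b * c by ring]; exact hdet, hinv⟩
    · funext x
      have h3 := congrFun hF (σ⁻¹ x)
      simp only [comp_apply, show σ (σ⁻¹ x) = x from σ.apply_symm_apply x] at h3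
      exact h3.symm

end RSphere

/-- A rational map of the Riemann sphere, given by a pair of coprime polynomials. -/
structure RatMap where
  num : Polynomial ℂ
  den : Polynomial ℂ
  coprime : IsCoprime num den

namespace RatMap

open RSphere

/-- The (topological) degree of a rational map. -/
def degree (f : RatMap) : ℕ := max f.num.natDegree f.den.natDegree

/-- Evaluation of a rational map at a point of the Riemann sphere. -/
def eval (f : RatMap) : RSphere → RSphere := fun z =>
  match z with
  | ∞ =>
      if f.den.degree < f.num.degree then ∞
      else if f.num.degree < f.den.degree then ((0 : ℂ) : RSphere)
      else ((f.num.leadingCoeff / f.den.leadingCoeff : ℂ) : RSphere)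
  | (x : ℂ) =>
      if f.den.eval x = 0 then ∞ else ((f.num.eval x / f.den.eval x : ℂ) : RSphere)

/-- The polynomial whose finite roots (with multiplicity) form the fiber of `f` over `w`. -/
def fiberPoly (f : RatMap) (w : RSphere) : Polynomial ℂ :=
  match w with
  | ∞ => f.den
  | (c : ℂ) => f.num - Polynomial.C c * f.den

/-- The local degree of a rational map at a point of the Riemann sphere: the multiplicity
of the point in the fiber over its image. -/
def localDegree (f : RatMap) (z : RSphere) : ℕ :=
  match z with
  | ∞ => f.degree - (f.fiberPoly (f.eval ∞)).natDegree
  | (x : ℂ) => (f.fiberPoly (f.eval (x : RSphere))).rootMultiplicity x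

/-- The set of critical points of a rational map. -/
def criticalPoints (f : RatMap) : Set RSphere := {z | 2 ≤ f.localDegree z}

/-- The set of critical values of a rational map. -/
def criticalValues (f : RatMap) : Set RSphere := f.eval '' f.criticalPoints

/-- A rational map is bicritical if it has exactly two critical points. -/
def Bicritical (f : RatMap) : Prop := f.criticalPoints.encard = 2

/-- The local degree of the iterate `f^k` at `z` (computed by the chain rule for
local degrees). -/
def localDegreeIter (f : RatMap) (k : ℕ) (z : RSphere) : ℕ :=
  ∏ j ∈ Finset.range k, f.localDegree (f.eval^[j] z)

/-- The power map `z ↦ z ^ d` on the Riemann sphere. -/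
def powMap (d : ℕ) : RSphere → RSphere := fun z =>
  match z with
  | ∞ => ∞
  | (x : ℂ) => ((x ^ d : ℂ) : RSphere)

/-- The power map `z ↦ z ^ (-d)` on the Riemann sphere. -/
def powMapNeg (d : ℕ) : RSphere → RSphere := fun z =>
  match z with
  | ∞ => ((0 : ℂ) : RSphere)
  | (x : ℂ) => if x = 0 then ∞ else (((x ^ d)⁻¹ : ℂ) : RSphere)

/-- A rational map of degree `d` is a power map if it is Möbius-conjugate to
`z ↦ z ^ d` or to `z ↦ z ^ (-d)`. -/
def IsPowerMap (f : RatMap) : Prop :=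
  ∃ g h : RSphere → RSphere, IsMobius g ∧ IsMobius h ∧ g ∘ h = id ∧ h ∘ g = id ∧
    (g ∘ f.eval ∘ h = powMap f.degree ∨ g ∘ f.eval ∘ h = powMapNeg f.degree)

/-- The deck group `Deck(f^k)` of the `k`-th iterate of `f`, with the convention
`Deck(f^0) = {id}`. -/
def deckIter (f : RatMap) (k : ℕ) : Subgroup (Equiv.Perm RSphere) :=
  if k = 0 then ⊥ else deckGroup (f.eval^[k])

/-- `Deck*(f^k) = Deck(f^k) \ Deck(f^{k-1})`, with the convention `Deck*(f^0) = {id}`. -/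
def deckStar (f : RatMap) (k : ℕ) : Set (Equiv.Perm RSphere) :=
  if k = 0 then {1}
  else (deckIter f k : Set (Equiv.Perm RSphere)) \ (deckIter f (k - 1) : Set (Equiv.Perm RSphere))

/-- A bicritical rational map with critical values `v₁ ≠ v₂` is critically coalescing
if `f(v₁) = f(v₂)`. -/
def CriticallyCoalescing (f : RatMap) : Prop :=
  ∃ v₁ v₂ : RSphere, v₁ ≠ v₂ ∧ f.criticalValues = {v₁, v₂} ∧ f.eval v₁ = f.eval v₂

end RatMap

/-- A group is dihedral if it is isomorphic to `D_{2n}` for some `n ≥ 2` (the Klein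
four-group `V₄ = D₄` counts as dihedral). -/
def IsDihedral (G : Type*) [Group G] : Prop :=
  ∃ n : ℕ, 2 ≤ n ∧ Nonempty (G ≃* DihedralGroup n)


namespace RatMap

open RSphere Polynomial

/-- The Wronskian of a rational map. -/
def wron (f : RatMap) : Polynomial ℂ :=
  f.num.derivative * f.den - f.num * f.den.derivative

/-- Key local computation: the root multiplicity of a Wronskian-type expression. -/
lemma rootMultiplicity_wron_aux {p q h : Polynomial ℂ} {x : ℂ} {n : ℕ}
    (hp : p = (X - C x) ^ (n + 1) * h) (hh : h.eval x ≠ 0) (hq : q.eval x ≠ 0) :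
    rootMultiplicity x (p.derivative * q - p * q.derivative) = n := by
  set k : Polynomial ℂ := C ((n : ℂ) + 1) * h * q +
      (X - C x) * (h.derivative * q - h * q.derivative) with hk
  have hkx : k.eval x ≠ 0 := by
    have : k.eval x = ((n : ℂ) + 1) * h.eval x * q.eval x := by
      simp [hk]
    rw [this]
    exact mul_ne_zero (mul_ne_zero (Nat.cast_add_one_ne_zero n) hh) hq
  have hid : p.derivative * q - p * q.derivative = (X - C x) ^ n * k := by
    subst hp
    rw [hk]
    have hd : ((X - C x) ^ (n + 1) * h).derivative =
        C ((n : ℂ) + 1) * (X - C x) ^ n * h + (X - C x) ^ (n + 1) * h.derivative := by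
      rw [derivative_mul, derivative_pow]
      simp [mul_comm, mul_assoc, mul_left_comm]
    rw [hd]
    ring
  rw [hid, rootMultiplicity_mul, rootMultiplicity_X_sub_C_pow,
    rootMultiplicity_eq_zero (by simpa [IsRoot] using hkx), add_zero]
  refine mul_ne_zero (pow_ne_zero _ (X_sub_C_ne_zero x)) ?_
  intro h0
  rw [h0] at hkx
  simp at hkx
@[simp] lemma eval_coe (f : RatMap) (x : ℂ) :
    f.eval (x : RSphere) =
      if f.den.eval x = 0 then ∞ else ((f.num.eval x / f.den.eval x : ℂ) : RSphere) := rfl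

lemma eval_infty (f : RatMap) :
    f.eval ∞ = if f.den.degree < f.num.degree then ∞
      else if f.num.degree < f.den.degree then ((0 : ℂ) : RSphere)
      else ((f.num.leadingCoeff / f.den.leadingCoeff : ℂ) : RSphere) := rfl

@[simp] lemma fiberPoly_coe (f : RatMap) (c : ℂ) :
    f.fiberPoly (c : RSphere) = f.num - C c * f.den := rfl

@[simp] lemma fiberPoly_infty (f : RatMap) : f.fiberPoly ∞ = f.den := rfl

lemma localDegree_coe_def (f : RatMap) (x : ℂ) :
    f.localDegree (x : RSphere) = (f.fiberPoly (f.eval (x : RSphere))).rootMultiplicity x := rfl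

lemma localDegree_infty_def (f : RatMap) :
    f.localDegree ∞ = f.degree - (f.fiberPoly (f.eval ∞)).natDegree := rfl

lemma localDegree_infty_le (f : RatMap) : f.localDegree ∞ ≤ f.degree := Nat.sub_le _ _

lemma num_eval_ne_zero_of_den_eval_eq_zero {f : RatMap} {x : ℂ} (hd : f.den.eval x = 0) :
    f.num.eval x ≠ 0 := by
  obtain ⟨u, v, huv⟩ := f.coprime
  intro hn
  have := congrArg (Polynomial.eval x) huv
  simp [hn, hd] at this

lemma rootMultiplicity_neg (p : Polynomial ℂ) (x : ℂ) :
    rootMultiplicity x (-p) = rootMultiplicity x p := by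
  rcases eq_or_ne p 0 with rfl | hp
  · simp
  · have hneg : -p = C (-1) * p := by
      rw [map_neg, C_1, neg_one_mul]
    conv_lhs => rw [hneg]
    rw [rootMultiplicity_mul (by simpa using hp),
      rootMultiplicity_eq_zero (by simp [IsRoot]), zero_add]

lemma den_ne_zero {f : RatMap} (hW : f.wron ≠ 0) : f.den ≠ 0 := by
  rintro hd
  apply hW
  have hu : IsUnit f.num := by
    have := f.coprime
    rw [hd] at this
    exact isCoprime_zero_right.mp this
  obtain ⟨a, ha⟩ := Polynomial.isUnit_iff.mp hu
  rw [wron, hd, ← ha.2]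
  simp

lemma num_ne_zero {f : RatMap} (hW : f.wron ≠ 0) : f.num ≠ 0 := by
  rintro hn
  apply hW
  have hu : IsUnit f.den := by
    have := f.coprime
    rw [hn] at this
    exact isCoprime_zero_left.mp this
  obtain ⟨a, ha⟩ := Polynomial.isUnit_iff.mp hu
  rw [wron, hn, ← ha.2]
  simp

lemma constant_of_wron_eq_zero {f : RatMap} (hW : f.wron = 0) :
    f.num.natDegree = 0 ∧ f.den.natDegree = 0 := by
  have key : ∀ p q : Polynomial ℂ, IsCoprime p q → p.derivative * q = p * q.derivative →
      p.natDegree = 0 := by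
    intro p q hc hw
    by_contra hn
    have hp0 : p ≠ 0 := fun h => hn (by simp [h])
    have hdvd : p ∣ p.derivative * q := ⟨q.derivative, by rw [hw, mul_comm]⟩
    have hdvd' : p ∣ p.derivative := by
      rw [mul_comm] at hdvd
      exact hc.dvd_of_dvd_mul_left hdvd
    have hder : p.derivative ≠ 0 := fun h =>
      hn (natDegree_eq_zero_of_derivative_eq_zero h)
    have := Polynomial.natDegree_le_of_dvd hdvd' hder
    have := Polynomial.natDegree_derivative_lt hn
    omega
  have hw : f.num.derivative * f.den = f.num * f.den.derivative := by
    have : f.wron = 0 := hW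
    rw [wron, sub_eq_zero] at this
    exact this
  refine ⟨key _ _ f.coprime hw, key _ _ f.coprime.symm ?_⟩
  rw [mul_comm, ← hw, mul_comm]

lemma criticalPoints_empty_of_constant {f : RatMap}
    (hn : f.num.natDegree = 0) (hd : f.den.natDegree = 0) : f.criticalPoints = ∅ := by
  have hdeg : f.degree = 0 := by simp [RatMap.degree, hn, hd]
  ext z
  simp only [criticalPoints, Set.mem_setOf_eq, Set.mem_empty_iff_false, iff_false, not_le]
  induction z using OnePoint.rec with
  | infty =>
    have := f.localDegree_infty_le
    omega
  | coe x =>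
    have hnum : f.num = C (f.num.coeff 0) := eq_C_of_natDegree_eq_zero hn
    have hden : f.den = C (f.den.coeff 0) := eq_C_of_natDegree_eq_zero hd
    rw [localDegree_coe_def, eval_coe]
    rcases eq_or_ne (f.den.eval x) 0 with h0 | h0
    · have : f.den = 0 := by
        rw [hden] at h0 ⊢
        simp at h0
        simp [h0]
      rw [if_pos h0, fiberPoly_infty, this]
      simp
    · rw [if_neg h0, fiberPoly_coe]
      have : f.num - C (f.num.eval x / f.den.eval x) * f.den = 0 := by
        rw [hden] at h0
        rw [hnum, hden]
        simp only [eval_C] at h0 ⊢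
        rw [← C_mul, ← C_sub, div_mul_cancel₀ _ h0, sub_self, map_zero]
      rw [this]
      simp

lemma wron_ne_zero {f : RatMap} (hf : f.criticalPoints.Nonempty) : f.wron ≠ 0 := by
  intro hW
  obtain ⟨hn, hd⟩ := constant_of_wron_eq_zero hW
  rw [criticalPoints_empty_of_constant hn hd] at hf
  exact Set.not_nonempty_empty hf

lemma fiberPoly_ne_zero {f : RatMap} (hW : f.wron ≠ 0) (w : RSphere) :
    f.fiberPoly w ≠ 0 := by
  induction w using OnePoint.rec with
  | infty => exact den_ne_zero hW
  | coe c =>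
    rw [fiberPoly_coe]
    intro h
    rw [sub_eq_zero] at h
    have hu : IsUnit f.den :=
      f.coprime.isUnit_of_dvd' ⟨C c, by rw [h, mul_comm]⟩ dvd_rfl
    obtain ⟨b, hb⟩ := Polynomial.isUnit_iff.mp hu
    apply hW
    rw [wron, h, ← hb.2]
    simp

/-- The central local computation: for every finite point, the root multiplicity of the
Wronskian is the local degree minus one, and the local degree is at least one. -/
lemma localDegree_coe_spec {f : RatMap} (hW : f.wron ≠ 0) (x : ℂ) :
    1 ≤ f.localDegree (x : RSphere) ∧
      rootMultiplicity x f.wron = f.localDegree (x : RSphere) - 1 := by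
  rcases eq_or_ne (f.den.eval x) 0 with h0 | h0
  · -- pole case
    have heval : f.eval (x : RSphere) = ∞ := by rw [eval_coe, if_pos h0]
    have hld : f.localDegree (x : RSphere) = rootMultiplicity x f.den := by
      rw [localDegree_coe_def, heval, fiberPoly_infty]
    have hD : f.den ≠ 0 := den_ne_zero hW
    have hpos : 1 ≤ rootMultiplicity x f.den := (rootMultiplicity_pos hD).mpr h0
    refine ⟨by omega, ?_⟩
    obtain ⟨n, hn⟩ : ∃ n, rootMultiplicity x f.den = n + 1 :=
      ⟨rootMultiplicity x f.den - 1, by omega⟩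
    set h := f.den /ₘ (X - C x) ^ rootMultiplicity x f.den with hh
    have hfac : f.den = (X - C x) ^ (n + 1) * h := by
      rw [← hn, hh, pow_mul_divByMonic_rootMultiplicity_eq]
    have hhx : h.eval x ≠ 0 := eval_divByMonic_pow_rootMultiplicity_ne_zero x hD
    have haux := rootMultiplicity_wron_aux hfac hhx (num_eval_ne_zero_of_den_eval_eq_zero h0)
    have hwid : f.den.derivative * f.num - f.den * f.num.derivative = -f.wron := by
      rw [wron]; ring
    rw [hwid, rootMultiplicity_neg] at haux
    rw [haux, hld, hn]
    omega
  · -- regular case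
    set v := f.num.eval x / f.den.eval x with hv
    have heval : f.eval (x : RSphere) = (v : RSphere) := by rw [eval_coe, if_neg h0]
    set g := f.num - C v * f.den with hg
    have hgx : g.eval x = 0 := by
      simp only [hg, eval_sub, eval_mul, eval_C, hv]
      field_simp
      ring
    have hgne : g ≠ 0 := by
      have := fiberPoly_ne_zero hW (v : RSphere)
      rwa [fiberPoly_coe] at this
    have hld : f.localDegree (x : RSphere) = rootMultiplicity x g := by
      rw [localDegree_coe_def, heval, fiberPoly_coe]
    have hpos : 1 ≤ rootMultiplicity x g := (rootMultiplicity_pos hgne).mpr hgx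
    refine ⟨by omega, ?_⟩
    obtain ⟨n, hn⟩ : ∃ n, rootMultiplicity x g = n + 1 :=
      ⟨rootMultiplicity x g - 1, by omega⟩
    set h := g /ₘ (X - C x) ^ rootMultiplicity x g with hh
    have hfac : g = (X - C x) ^ (n + 1) * h := by
      rw [← hn, hh, pow_mul_divByMonic_rootMultiplicity_eq]
    have hhx : h.eval x ≠ 0 := eval_divByMonic_pow_rootMultiplicity_ne_zero x hgne
    have haux := rootMultiplicity_wron_aux hfac hhx h0
    have hwid : g.derivative * f.den - g * f.den.derivative = f.wron := by
      simp only [hg, derivative_sub, derivative_C_mul, wron]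
      ring
    rw [hwid] at haux
    rw [haux, hld, hn]
    omega
lemma coeff_derivative_mul_top (p q : Polynomial ℂ) :
    (p.derivative * q).coeff (p.natDegree + q.natDegree - 1) =
      (p.natDegree : ℂ) * p.leadingCoeff * q.leadingCoeff := by
  rcases Nat.eq_zero_or_pos p.natDegree with hn | hn
  · have : p.derivative = 0 := by
      rw [eq_C_of_natDegree_eq_zero hn, derivative_C]
    rw [this, hn]
    simp
  · have hcoeff : p.derivative.coeff (p.natDegree - 1) = (p.natDegree : ℂ) * p.leadingCoeff := by
    -- coeff_derivative : coeff (derivative p) n = coeff p (n + 1) * (n + 1)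
      rw [coeff_derivative, Nat.sub_add_cancel hn, coeff_natDegree]
      have hcast : ((p.natDegree - 1 : ℕ) : ℂ) + 1 = (p.natDegree : ℂ) := by
        rw [Nat.cast_sub hn]
        push_cast
        ring
      rw [hcast]
      ring
    have hne : p.derivative.coeff (p.natDegree - 1) ≠ 0 := by
      rw [hcoeff]
      have hp0 : p ≠ 0 := fun h => by simp [h] at hn
      exact mul_ne_zero (Nat.cast_ne_zero.mpr (by omega)) (leadingCoeff_ne_zero.mpr hp0)
    have hdlt : p.derivative.natDegree = p.natDegree - 1 := by
      have h1 : p.derivative.natDegree < p.natDegree := natDegree_derivative_lt (by omega)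
      have h2 : p.natDegree - 1 ≤ p.derivative.natDegree := le_natDegree_of_ne_zero hne
      omega
    have := coeff_mul_degree_add_degree p.derivative q
    rw [hdlt] at this
    rw [show p.natDegree + q.natDegree - 1 = p.natDegree - 1 + q.natDegree by omega, this]
    rw [leadingCoeff, hdlt, hcoeff]

lemma natDegree_wron_aux {p q : Polynomial ℂ} (hp : p ≠ 0) (hq : q ≠ 0)
    (hne : p.natDegree ≠ q.natDegree) :
    (p.derivative * q - p * q.derivative).natDegree = p.natDegree + q.natDegree - 1 ∧
      p.derivative * q - p * q.derivative ≠ 0 := by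
  set n := p.natDegree with hnn
  set m := q.natDegree with hmm
  have hcoeff : (p.derivative * q - p * q.derivative).coeff (n + m - 1) =
      ((n : ℂ) - m) * (p.leadingCoeff * q.leadingCoeff) := by
    rw [coeff_sub, coeff_derivative_mul_top p q]
    have h2 : (p * q.derivative).coeff (n + m - 1) =
        (m : ℂ) * q.leadingCoeff * p.leadingCoeff := by
      rw [mul_comm p q.derivative, show n + m - 1 = m + n - 1 by omega]
      exact coeff_derivative_mul_top q p
    rw [h2]
    ring
  have hcne : (p.derivative * q - p * q.derivative).coeff (n + m - 1) ≠ 0 := by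
    rw [hcoeff]
    refine mul_ne_zero (sub_ne_zero.mpr ?_) (mul_ne_zero (leadingCoeff_ne_zero.mpr hp)
      (leadingCoeff_ne_zero.mpr hq))
    exact_mod_cast hne
  have hWne : p.derivative * q - p * q.derivative ≠ 0 := fun h => by simp [h] at hcne
  have hle : (p.derivative * q - p * q.derivative).natDegree ≤ n + m - 1 := by
    refine (natDegree_sub_le _ _).trans (max_le ?_ ?_)
    · rcases Nat.eq_zero_or_pos n with h0 | h0
      · have hz : p.derivative = 0 := by
          rw [eq_C_of_natDegree_eq_zero h0, derivative_C]
        simp [hz]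
      · refine (natDegree_mul_le).trans ?_
        have := natDegree_derivative_lt (p := p) (by omega)
        omega
    · rcases Nat.eq_zero_or_pos m with h0 | h0
      · have hz : q.derivative = 0 := by
          rw [eq_C_of_natDegree_eq_zero h0, derivative_C]
        simp [hz]
      · refine (natDegree_mul_le).trans ?_
        have := natDegree_derivative_lt (p := q) (by omega)
        omega
  exact ⟨le_antisymm hle (le_natDegree_of_ne_zero hcne), hWne⟩

lemma fiberPoly_natDegree_le (f : RatMap) (w : RSphere) :
    (f.fiberPoly w).natDegree ≤ f.degree := by
  induction w using OnePoint.rec with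
  | infty => exact le_max_right _ _
  | coe c =>
    rw [fiberPoly_coe]
    refine (natDegree_sub_le _ _).trans (max_le (le_max_left _ _) ?_)
    exact (natDegree_C_mul_le _ _).trans (le_max_right _ _)

/-- The behaviour of the Wronskian degree and the local degree at infinity. -/
lemma wron_natDegree_spec {f : RatMap} (hW : f.wron ≠ 0) :
    f.wron.natDegree + f.localDegree ∞ = 2 * f.degree - 1 ∧
      1 ≤ f.localDegree ∞ ∧ f.localDegree ∞ ≤ f.degree := by
  have hN : f.num ≠ 0 := num_ne_zero hW
  have hD : f.den ≠ 0 := den_ne_zero hW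
  set n := f.num.natDegree with hn
  set m := f.den.natDegree with hm
  have hdegN : f.num.degree = (n : WithBot ℕ) := degree_eq_natDegree hN
  have hdegD : f.den.degree = (m : WithBot ℕ) := degree_eq_natDegree hD
  rcases lt_trichotomy m n with hc | hc | hc
  · -- m < n : f(∞) = ∞
    have heval : f.eval ∞ = ∞ := by
      rw [eval_infty, if_pos (by rw [hdegN, hdegD]; exact_mod_cast hc)]
    have hld : f.localDegree ∞ = n - m := by
      rw [localDegree_infty_def, heval, fiberPoly_infty, RatMap.degree, ← hn, ← hm,
        max_eq_left (le_of_lt hc)]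
    have hw := natDegree_wron_aux hN hD (by omega)
    have hwn : f.wron.natDegree = n + m - 1 := by rw [wron]; exact hw.1
    have hdeg : f.degree = n := max_eq_left (le_of_lt hc)
    rw [hwn, hld, hdeg]
    omega
  · -- n = m : f(∞) = lc N / lc D
    have hn1 : 1 ≤ n := by
      by_contra h
      apply hW
      have h0 : n = 0 := by omega
      have hNc := eq_C_of_natDegree_eq_zero (hn ▸ h0)
      have hDc := eq_C_of_natDegree_eq_zero (hm ▸ (hc ▸ h0 : m = 0))
      rw [wron, hNc, hDc]
      simp
    set L := f.num.leadingCoeff / f.den.leadingCoeff with hL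
    have hlcD : f.den.leadingCoeff ≠ 0 := leadingCoeff_ne_zero.mpr hD
    have hlcN : f.num.leadingCoeff ≠ 0 := leadingCoeff_ne_zero.mpr hN
    have hLne : L ≠ 0 := div_ne_zero hlcN hlcD
    have heval : f.eval ∞ = (L : RSphere) := by
      rw [eval_infty, if_neg (by rw [hdegN, hdegD, hc]; exact lt_irrefl _),
        if_neg (by rw [hdegN, hdegD, hc]; exact lt_irrefl _)]
    set g := f.num - C L * f.den with hg
    have hgne : g ≠ 0 := by
      have := fiberPoly_ne_zero hW (L : RSphere)
      rwa [fiberPoly_coe] at this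
    have hdeglt : g.degree < f.num.degree := by
      refine degree_sub_lt ?_ hN ?_
      · rw [degree_C_mul hLne, hdegN, hdegD, hc]
      · rw [leadingCoeff_mul, leadingCoeff_C, hL, div_mul_cancel₀ _ hlcD]
    have hr : g.natDegree < n := by
      have := natDegree_lt_natDegree hgne hdeglt
      omega
    have hwid : f.wron = g.derivative * f.den - g * f.den.derivative := by
      rw [wron, hg, derivative_sub, derivative_C_mul]
      ring
    have hw := natDegree_wron_aux hgne hD (by omega)
    have hwn : f.wron.natDegree = g.natDegree + m - 1 := by rw [hwid]; exact hw.1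
    have hld : f.localDegree ∞ = n - g.natDegree := by
      rw [localDegree_infty_def, heval, fiberPoly_coe, ← hg, RatMap.degree, ← hn, ← hm, ← hc,
        max_self]
    have hdeg : f.degree = n := by rw [RatMap.degree, ← hn, ← hm, ← hc, max_self]
    rw [hwn, hld, hdeg]
    omega
  · -- n < m : f(∞) = 0
    have heval : f.eval ∞ = ((0 : ℂ) : RSphere) := by
      have h1 : ¬f.den.degree < f.num.degree := by
        rw [hdegN, hdegD]
        intro h
        have : m < n := by exact_mod_cast h
        omega
      have h2 : f.num.degree < f.den.degree := by
        rw [hdegN, hdegD]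
        exact_mod_cast hc
      rw [eval_infty, if_neg h1, if_pos h2]
    have hfp : f.fiberPoly (((0 : ℂ) : RSphere)) = f.num := by
      rw [fiberPoly_coe, map_zero, zero_mul, sub_zero]
    have hld : f.localDegree ∞ = m - n := by
      rw [localDegree_infty_def, heval, hfp, RatMap.degree, ← hn, ← hm,
        max_eq_right (le_of_lt hc)]
    have hw := natDegree_wron_aux hN hD (by omega)
    have hwn : f.wron.natDegree = n + m - 1 := by rw [wron]; exact hw.1
    have hdeg : f.degree = m := max_eq_right (le_of_lt hc)
    rw [hwn, hld, hdeg]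
    omega
lemma rootMultiplicity_le_natDegree' {p : Polynomial ℂ} (hp : p ≠ 0) (x : ℂ) :
    rootMultiplicity x p ≤ p.natDegree := by
  have hdvd := pow_rootMultiplicity_dvd p x
  have := natDegree_le_of_dvd hdvd hp
  rwa [(monic_X_sub_C x).natDegree_pow, natDegree_X_sub_C, mul_one] at this

lemma localDegree_le_degree {f : RatMap} (hW : f.wron ≠ 0) (z : RSphere) :
    f.localDegree z ≤ f.degree := by
  induction z using OnePoint.rec with
  | infty => exact f.localDegree_infty_le
  | coe x =>
    rw [localDegree_coe_def]
    exact (rootMultiplicity_le_natDegree' (fiberPoly_ne_zero hW _) x).trans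
      (f.fiberPoly_natDegree_le _)

lemma natDegree_eq_sum_rootMult {p : Polynomial ℂ} (hp : p ≠ 0) (s : Finset ℂ)
    (hs : ∀ r : ℂ, p.IsRoot r → r ∈ s) :
    p.natDegree = ∑ r ∈ s, rootMultiplicity r p := by
  have h1 : p.natDegree = Multiset.card p.roots := by
    have h := (IsAlgClosed.splits p).natDegree_eq_card_roots
    simpa [Polynomial.map_id] using h
  have hsub : p.roots.toFinset ⊆ s := by
    intro r hr
    exact hs r (isRoot_of_mem_roots (Multiset.mem_toFinset.mp hr))
  have hzero : ∀ x ∈ s, x ∉ p.roots.toFinset → p.roots.count x = 0 := by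
    intro x _ hx
    rw [Multiset.count_eq_zero]
    exact fun h => hx (Multiset.mem_toFinset.mpr h)
  rw [h1, ← Multiset.toFinset_sum_count_eq, Finset.sum_subset hsub hzero]
  exact Finset.sum_congr rfl fun r _ => count_roots p

lemma exists_coe_of_ne_infty {z : RSphere} (h : z ≠ ∞) : ∃ x : ℂ, z = (x : RSphere) := by
  induction z using OnePoint.rec with
  | infty => exact absurd rfl h
  | coe x => exact ⟨x, rfl⟩

lemma mem_criticalPoints_iff (f : RatMap) (z : RSphere) :
    z ∈ f.criticalPoints ↔ 2 ≤ f.localDegree z := Iff.rfl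

/-- Riemann–Hurwitz style conclusion for bicritical maps: both critical points have
maximal local degree, and the degree is at least two. -/
lemma bicritical_main {f : RatMap} (hf : f.Bicritical) :
    2 ≤ f.degree ∧ ∀ c ∈ f.criticalPoints, f.localDegree c = f.degree := by
  obtain ⟨c1, c2, hne, hC⟩ := Set.encard_eq_two.mp hf
  have hmem1 : c1 ∈ f.criticalPoints := by rw [hC]; exact Set.mem_insert _ _
  have hmem2 : c2 ∈ f.criticalPoints := by rw [hC]; exact Set.mem_insert_of_mem _ rfl
  have hW : f.wron ≠ 0 := wron_ne_zero ⟨c1, hmem1⟩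
  set d := f.degree with hd
  obtain ⟨hsum, hinf1, hinfd⟩ := wron_natDegree_spec hW
  have hcrit_root : ∀ r : ℂ, f.wron.IsRoot r → (r : RSphere) ∈ f.criticalPoints := by
    intro r hr
    obtain ⟨h1, h2⟩ := localDegree_coe_spec hW r
    have : 1 ≤ rootMultiplicity r f.wron := (rootMultiplicity_pos hW).mpr hr
    rw [mem_criticalPoints_iff]
    omega
  by_cases hinfty : ∞ ∈ f.criticalPoints
  · -- one critical point is ∞
    -- WLOG c2 = ∞
    have hkey : ∀ x1 : ℂ, f.criticalPoints = {(x1 : RSphere), ∞} →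
        2 ≤ d ∧ ∀ c ∈ f.criticalPoints, f.localDegree c = d := by
      intro x1 hC'
      have hx1mem : (x1 : RSphere) ∈ f.criticalPoints := by
        rw [hC']; exact Set.mem_insert _ _
      obtain ⟨he1, he1'⟩ := localDegree_coe_spec hW x1
      have h2e1 : 2 ≤ f.localDegree (x1 : RSphere) := hx1mem
      have h2einf : 2 ≤ f.localDegree ∞ := hinfty
      have hle1 : f.localDegree (x1 : RSphere) ≤ d := localDegree_le_degree hW _
      have hWdeg : f.wron.natDegree = rootMultiplicity x1 f.wron := by
        rw [natDegree_eq_sum_rootMult hW {x1} (fun r hr => ?_), Finset.sum_singleton]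
        have := hcrit_root r hr
        rw [hC'] at this
        rcases this with h | h
        · simp [OnePoint.coe_eq_coe.mp h]
        · exact absurd h (OnePoint.coe_ne_infty r)
      rw [hWdeg, he1'] at hsum
      constructor
      · omega
      · intro c hc
        rw [hC'] at hc
        rcases hc with h | h
        · subst h; omega
        · rw [Set.mem_singleton_iff] at h; subst h; omega
    rcases (by rw [hC] at hinfty; exact hinfty : ∞ ∈ ({c1, c2} : Set RSphere)) with h | h
    · -- c1 = ∞, so c2 is finite
      obtain ⟨x1, rfl⟩ := exists_coe_of_ne_infty
        (show c2 ≠ ∞ from fun hh => hne (by rw [← h, hh]))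
      exact hkey x1 (by rw [hC, ← h, Set.pair_comm])
    · rw [Set.mem_singleton_iff] at h
      obtain ⟨x1, rfl⟩ := exists_coe_of_ne_infty
        (show c1 ≠ ∞ from fun hh => hne (by rw [← h, hh]))
      exact hkey x1 (by rw [hC, ← h])
  · -- both critical points are finite
    have hfin : ∀ c ∈ f.criticalPoints, ∃ x : ℂ, c = (x : RSphere) := by
      intro c hc
      induction c using OnePoint.rec with
      | infty => exact absurd hc hinfty
      | coe x => exact ⟨x, rfl⟩
    obtain ⟨x1, rfl⟩ := hfin c1 hmem1
    obtain ⟨x2, rfl⟩ := hfin c2 hmem2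
    have hx12 : x1 ≠ x2 := fun h => hne (by rw [h])
    have heinf : f.localDegree ∞ = 1 := by
      have : ¬2 ≤ f.localDegree ∞ := hinfty
      omega
    obtain ⟨he1, he1'⟩ := localDegree_coe_spec hW x1
    obtain ⟨he2, he2'⟩ := localDegree_coe_spec hW x2
    have h2e1 : 2 ≤ f.localDegree (x1 : RSphere) := hmem1
    have h2e2 : 2 ≤ f.localDegree (x2 : RSphere) := hmem2
    have hle1 : f.localDegree (x1 : RSphere) ≤ d := localDegree_le_degree hW _
    have hle2 : f.localDegree (x2 : RSphere) ≤ d := localDegree_le_degree hW _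
    have hWdeg : f.wron.natDegree =
        rootMultiplicity x1 f.wron + rootMultiplicity x2 f.wron := by
      rw [natDegree_eq_sum_rootMult hW {x1, x2} (fun r hr => ?_), Finset.sum_pair hx12]
      have := hcrit_root r hr
      rw [hC] at this
      rcases this with h | h
      · simp [OnePoint.coe_eq_coe.mp h]
      · rw [Set.mem_singleton_iff] at h
        simp [OnePoint.coe_eq_coe.mp h]
    rw [hWdeg, he1', he2'] at hsum
    constructor
    · omega
    · intro c hc
      rw [hC] at hc
      rcases hc with h | h
      · subst h; omega
      · rw [Set.mem_singleton_iff] at h; subst h; omega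
lemma C_mul_left_cancel {a : ℂ} (ha : a ≠ 0) {p q : Polynomial ℂ} (h : C a * p = q) :
    p = C a⁻¹ * q := by
  rw [← h, ← mul_assoc, ← C_mul, inv_mul_cancel₀ ha, C_1, one_mul]

lemma natDegree_X_sub_C_pow' (x : ℂ) (d : ℕ) : ((X - C x) ^ d).natDegree = d := by
  rw [(monic_X_sub_C x).natDegree_pow, natDegree_X_sub_C, mul_one]

lemma coeff_X_sub_C_pow_self (x : ℂ) (d : ℕ) : ((X - C x) ^ d).coeff d = 1 := by
  have h := ((monic_X_sub_C x).pow d).coeff_natDegree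
  rwa [(monic_X_sub_C x).natDegree_pow, natDegree_X_sub_C, mul_one] at h

/-- Structure of the fiber polynomial at a finite point of maximal local degree. -/
lemma fiberPoly_eq_pow {f : RatMap} (hW : f.wron ≠ 0) {x : ℂ}
    (hld : f.localDegree (x : RSphere) = f.degree) :
    ∃ k : ℂ, k ≠ 0 ∧ f.fiberPoly (f.eval (x : RSphere)) = C k * (X - C x) ^ f.degree := by
  set g := f.fiberPoly (f.eval (x : RSphere)) with hg
  have hgne : g ≠ 0 := fiberPoly_ne_zero hW _
  have hmult : rootMultiplicity x g = f.degree := by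
    rw [← hld, localDegree_coe_def]
  have hdvd : (X - C x) ^ f.degree ∣ g := by
    rw [← hmult]; exact pow_rootMultiplicity_dvd g x
  obtain ⟨h, hh⟩ := hdvd
  have hhn : h ≠ 0 := fun h0 => hgne (by rw [hh, h0, mul_zero])
  have hdegh : h.natDegree = 0 := by
    have h1 : g.natDegree ≤ f.degree := hg ▸ f.fiberPoly_natDegree_le _
    have h2 : g.natDegree = f.degree + h.natDegree := by
      rw [hh, natDegree_mul (pow_ne_zero _ (X_sub_C_ne_zero x)) hhn, natDegree_X_sub_C_pow']
    omega
  refine ⟨h.coeff 0, fun h0 => hhn ?_, ?_⟩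
  · rw [eq_C_of_natDegree_eq_zero hdegh, h0, map_zero]
  · rw [hh, mul_comm]
    congr 1
    exact eq_C_of_natDegree_eq_zero hdegh

/-- Structure of the fiber polynomial over the image of infinity when infinity has
maximal local degree. -/
lemma fiberPoly_infty_eq_C {f : RatMap} (hW : f.wron ≠ 0) (hd : 1 ≤ f.degree)
    (hld : f.localDegree ∞ = f.degree) :
    ∃ k : ℂ, k ≠ 0 ∧ f.fiberPoly (f.eval ∞) = C k := by
  have h1 : (f.fiberPoly (f.eval ∞)).natDegree ≤ f.degree := f.fiberPoly_natDegree_le _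
  have h2 : f.degree - (f.fiberPoly (f.eval ∞)).natDegree = f.degree := by
    rw [← localDegree_infty_def, hld]
  have h3 : (f.fiberPoly (f.eval ∞)).natDegree = 0 := by omega
  have hne := fiberPoly_ne_zero hW (f.eval ∞)
  refine ⟨(f.fiberPoly (f.eval ∞)).coeff 0, fun h0 => hne ?_, eq_C_of_natDegree_eq_zero h3⟩
  rw [eq_C_of_natDegree_eq_zero h3, h0, map_zero]

/-- Distinct critical points of a bicritical map have distinct critical values. -/
lemma eval_critical_ne {f : RatMap} (hf : f.Bicritical) {c1 c2 : RSphere}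
    (h1 : c1 ∈ f.criticalPoints) (h2 : c2 ∈ f.criticalPoints) (hne : c1 ≠ c2) :
    f.eval c1 ≠ f.eval c2 := by
  obtain ⟨hd2, hld⟩ := bicritical_main hf
  have hW : f.wron ≠ 0 := wron_ne_zero ⟨c1, h1⟩
  intro heq
  have hmix : ∀ x : ℂ, (x : RSphere) ∈ f.criticalPoints → ∞ ∈ f.criticalPoints →
      f.eval (x : RSphere) = f.eval ∞ → False := by
    intro x hx hi he
    obtain ⟨k1, hk1, hfp1⟩ := fiberPoly_eq_pow hW (hld _ hx)
    obtain ⟨k2, hk2, hfp2⟩ := fiberPoly_infty_eq_C hW (by omega) (hld _ hi)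
    rw [he, hfp2] at hfp1
    have := congrArg natDegree hfp1
    rw [natDegree_C, natDegree_C_mul hk1, natDegree_X_sub_C_pow'] at this
    omega
  induction c1 using OnePoint.rec with
  | infty =>
    induction c2 using OnePoint.rec with
    | infty => exact hne rfl
    | coe x2 => exact hmix x2 h2 h1 heq.symm
  | coe x1 =>
    induction c2 using OnePoint.rec with
    | infty => exact hmix x1 h1 h2 heq
    | coe x2 =>
      have hx12 : x1 ≠ x2 := fun h => hne (by rw [h])
      obtain ⟨k1, hk1, hfp1⟩ := fiberPoly_eq_pow hW (hld _ h1)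
      obtain ⟨k2, hk2, hfp2⟩ := fiberPoly_eq_pow hW (hld _ h2)
      rw [heq, hfp2] at hfp1
      have := congrArg (Polynomial.eval x2) hfp1
      simp only [eval_mul, eval_C, eval_pow, eval_sub, eval_X, sub_self] at this
      rw [zero_pow (by omega), mul_zero] at this
      exact (mul_ne_zero hk1 (pow_ne_zero _ (sub_ne_zero.mpr (fun h => hx12 h.symm)))) this.symm

lemma mApply_inverses {a b c d : ℂ} (h : a * d - b * c ≠ 0) :
    mApply a b c d ∘ mApply d (-b) (-c) a = id ∧
      mApply d (-b) (-c) a ∘ mApply a b c d = id := by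
  refine ⟨?_, mApply_inv_comp h⟩
  have h' : d * a - -b * -c ≠ 0 := by
    rw [show d * a - -b * -c = a * d - b * c by ring]; exact h
  have := mApply_inv_comp h'
  simpa using this

/-- A rational map is in (generalized) normal form if it factors as a Möbius map,
a power map, and a Möbius map sending the critical points to `0` and `∞`. -/
def IsNormal (f : RatMap) : Prop :=
  ∃ A Ai B Bi : RSphere → RSphere, IsMobius A ∧ IsMobius B ∧
    A ∘ Ai = id ∧ Ai ∘ A = id ∧ B ∘ Bi = id ∧ Bi ∘ B = id ∧
    f.eval = A ∘ powMap f.degree ∘ B ∧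
    B '' f.criticalPoints = {((0 : ℂ) : RSphere), ∞}
@[simp] lemma powMap_coe (d : ℕ) (x : ℂ) : powMap d (x : RSphere) = ((x ^ d : ℂ) : RSphere) := rfl

@[simp] lemma powMap_infty (d : ℕ) : powMap d ∞ = ∞ := rfl

lemma mApply_c0_coe (a b d z : ℂ) (hd : d ≠ 0) :
    mApply a b 0 d (z : RSphere) = (((a * z + b) / d : ℂ) : RSphere) := by
  rw [mApply_coe, if_neg (by simpa using hd)]
  norm_num

lemma mApply_c0_infty (a b d : ℂ) : mApply a b 0 d ∞ = ∞ := by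
  rw [mApply_infty, if_pos rfl]

lemma affine_image_pair (x1 : ℂ) (f : RatMap)
    (hC : f.criticalPoints = {(x1 : RSphere), ∞}) :
    mApply 1 (-x1) 0 1 '' f.criticalPoints = {((0 : ℂ) : RSphere), ∞} := by
  rw [hC, Set.image_pair, mApply_c0_coe 1 (-x1) 1 x1 one_ne_zero, mApply_c0_infty]
  norm_num

/-- Normal form, configuration II.b: critical points `x1, ∞`, critical values `v1, ∞`. -/
lemma isNormal_IIB {f : RatMap} {x1 v1 k1 k2 : ℂ}
    (hk1 : k1 ≠ 0) (hk2 : k2 ≠ 0)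
    (hC : f.criticalPoints = {(x1 : RSphere), ∞})
    (hev2 : f.eval ∞ = ∞)
    (hE1 : f.num - C v1 * f.den = C k1 * (X - C x1) ^ f.degree)
    (hE2 : f.den = C k2) :
    IsNormal f := by
  have hAdet : k1 * k2 - v1 * k2 * 0 ≠ 0 := by simpa using mul_ne_zero hk1 hk2
  have hBdet : (1 : ℂ) * 1 - -x1 * 0 ≠ 0 := by norm_num
  obtain ⟨hA1, hA2⟩ := mApply_inverses hAdet
  obtain ⟨hB1, hB2⟩ := mApply_inverses hBdet
  refine ⟨mApply k1 (v1 * k2) 0 k2, _, mApply 1 (-x1) 0 1, _,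
    ⟨k1, v1 * k2, 0, k2, hAdet, rfl⟩, ⟨1, -x1, 0, 1, hBdet, rfl⟩,
    hA1, hA2, hB1, hB2, ?_, affine_image_pair x1 f hC⟩
  rw [hE2] at hE1
  have hnum : f.num = C k1 * (X - C x1) ^ f.degree + C (v1 * k2) := by
    rw [C_mul]; linear_combination hE1
  funext z
  induction z using OnePoint.rec with
  | infty =>
    rw [comp_apply, comp_apply, mApply_c0_infty, powMap_infty, mApply_c0_infty, hev2]
  | coe z =>
    have hDz : f.den.eval z = k2 := by rw [hE2, eval_C]
    have hNz : f.num.eval z = k1 * (z - x1) ^ f.degree + v1 * k2 := by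
      rw [hnum]; simp
    rw [comp_apply, comp_apply, mApply_c0_coe 1 (-x1) 1 z one_ne_zero, powMap_coe,
      mApply_c0_coe k1 (v1 * k2) k2 _ hk2, eval_coe, hDz, hNz, if_neg hk2,
      show (1 : ℂ) * z + -x1 = z - x1 by ring, div_one]

/-- Normal form, configuration II.c: critical points `x1, ∞`, critical values `∞, v2`. -/
lemma isNormal_IIC {f : RatMap} {x1 v2 k1 k2 : ℂ} (hd : 2 ≤ f.degree)
    (hk1 : k1 ≠ 0) (hk2 : k2 ≠ 0)
    (hC : f.criticalPoints = {(x1 : RSphere), ∞})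
    (hev2 : f.eval ∞ = (v2 : RSphere))
    (hE1 : f.den = C k1 * (X - C x1) ^ f.degree)
    (hE2 : f.num - C v2 * f.den = C k2) :
    IsNormal f := by
  have hAdet : v2 * k1 * 0 - k2 * k1 ≠ 0 := by simpa using mul_ne_zero hk2 hk1
  have hBdet : (1 : ℂ) * 1 - -x1 * 0 ≠ 0 := by norm_num
  obtain ⟨hA1, hA2⟩ := mApply_inverses hAdet
  obtain ⟨hB1, hB2⟩ := mApply_inverses hBdet
  refine ⟨mApply (v2 * k1) k2 k1 0, _, mApply 1 (-x1) 0 1, _,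
    ⟨v2 * k1, k2, k1, 0, hAdet, rfl⟩, ⟨1, -x1, 0, 1, hBdet, rfl⟩,
    hA1, hA2, hB1, hB2, ?_, affine_image_pair x1 f hC⟩
  rw [hE1] at hE2
  have hnum : f.num = C (v2 * k1) * (X - C x1) ^ f.degree + C k2 := by
    rw [C_mul]; linear_combination hE2
  funext z
  induction z using OnePoint.rec with
  | infty =>
    rw [comp_apply, comp_apply, mApply_c0_infty, powMap_infty, mApply_infty, if_neg hk1,
      hev2, OnePoint.coe_eq_coe]
    field_simp
  | coe z =>
    have hDz : f.den.eval z = k1 * (z - x1) ^ f.degree := by rw [hE1]; simp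
    have hNz : f.num.eval z = v2 * k1 * (z - x1) ^ f.degree + k2 := by
      rw [hnum]; simp
    rw [comp_apply, comp_apply, mApply_c0_coe 1 (-x1) 1 z one_ne_zero, powMap_coe,
      eval_coe, hDz, hNz, mApply_coe]
    have harg : (1 * z + -x1) / 1 = z - x1 := by rw [one_mul, div_one, ← sub_eq_add_neg]
    rw [harg]
    rcases eq_or_ne ((z - x1) ^ f.degree) 0 with h0 | h0
    · rw [if_pos (by rw [h0, mul_zero]), if_pos (by rw [h0]; ring)]
    · rw [if_neg (mul_ne_zero hk1 h0), if_neg (by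
        intro h
        exact (mul_ne_zero hk1 h0) (by linear_combination h))]
      congr 1
      rw [add_zero]

/-- Normal form, configuration II.a: critical points `x1, ∞`, critical values `v1, v2`. -/
lemma isNormal_IIA {f : RatMap} {x1 v1 v2 k1 k2 : ℂ}
    (hk1 : k1 ≠ 0) (hk2 : k2 ≠ 0) (hv : v1 ≠ v2)
    (hC : f.criticalPoints = {(x1 : RSphere), ∞})
    (hev2 : f.eval ∞ = (v2 : RSphere))
    (hE1 : f.num - C v1 * f.den = C k1 * (X - C x1) ^ f.degree)
    (hE2 : f.num - C v2 * f.den = C k2) :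
    IsNormal f := by
  have hsub : v2 - v1 ≠ 0 := sub_ne_zero.mpr (Ne.symm hv)
  have hAdet : v2 * k1 * -k2 - -(v1 * k2) * k1 ≠ 0 := by
    have h : v2 * k1 * -k2 - -(v1 * k2) * k1 = -(k1 * k2 * (v2 - v1)) := by ring
    rw [h, neg_ne_zero]
    exact mul_ne_zero (mul_ne_zero hk1 hk2) hsub
  have hBdet : (1 : ℂ) * 1 - -x1 * 0 ≠ 0 := by norm_num
  obtain ⟨hA1, hA2⟩ := mApply_inverses hAdet
  obtain ⟨hB1, hB2⟩ := mApply_inverses hBdet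
  refine ⟨mApply (v2 * k1) (-(v1 * k2)) k1 (-k2), _, mApply 1 (-x1) 0 1, _,
    ⟨v2 * k1, -(v1 * k2), k1, -k2, hAdet, rfl⟩, ⟨1, -x1, 0, 1, hBdet, rfl⟩,
    hA1, hA2, hB1, hB2, ?_, affine_image_pair x1 f hC⟩
  funext z
  induction z using OnePoint.rec with
  | infty =>
    rw [comp_apply, comp_apply, mApply_c0_infty, powMap_infty, mApply_infty, if_neg hk1,
      hev2, OnePoint.coe_eq_coe]
    field_simp
  | coe z =>
    have e1 : f.num.eval z - v1 * f.den.eval z = k1 * (z - x1) ^ f.degree := by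
      have := congrArg (Polynomial.eval z) hE1
      simpa using this
    have e2 : f.num.eval z - v2 * f.den.eval z = k2 := by
      have := congrArg (Polynomial.eval z) hE2
      simpa using this
    set u := (z - x1) ^ f.degree with hu
    have hDz : (v2 - v1) * f.den.eval z = k1 * u - k2 := by linear_combination e1 - e2
    have hNz : (v2 - v1) * f.num.eval z = v2 * (k1 * u) - v1 * k2 := by
      linear_combination v2 * e1 - v1 * e2
    rw [comp_apply, comp_apply, mApply_c0_coe 1 (-x1) 1 z one_ne_zero, powMap_coe,
      eval_coe, mApply_coe]
    have harg : ((1 * z + -x1) / 1) ^ f.degree = u := by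
      rw [hu, one_mul, div_one, ← sub_eq_add_neg]
    rw [harg]
    have hcond : f.den.eval z = 0 ↔ k1 * u + -k2 = 0 := by
      constructor
      · intro h; rw [h, mul_zero] at hDz; linear_combination -hDz
      · intro h
        have h' : (v2 - v1) * f.den.eval z = 0 := by rw [hDz]; linear_combination h
        exact (mul_eq_zero.mp h').resolve_left hsub
    rcases eq_or_ne (f.den.eval z) 0 with h0 | h0
    · rw [if_pos h0, if_pos (hcond.mp h0)]
    · have h1 : k1 * u + -k2 ≠ 0 := fun h => h0 (hcond.mpr h)
      rw [if_neg h0, if_neg h1]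
      rw [OnePoint.coe_eq_coe, div_eq_div_iff h0 h1]
      have key : (v2 - v1) * (f.num.eval z * (k1 * u + -k2)) =
          (v2 - v1) * ((v2 * k1 * u + -(v1 * k2)) * f.den.eval z) := by
        linear_combination (k1 * u + -k2) * hNz - (v2 * (k1 * u) + -(v1 * k2)) * hDz
      have hkey := mul_left_cancel₀ hsub key
      linear_combination hkey
lemma degree_eq_of_coeff_ne_zero' {P : Polynomial ℂ} {d : ℕ} (hle : P.natDegree ≤ d)
    (hc : P.coeff d ≠ 0) : P.degree = (d : WithBot ℕ) ∧ P.leadingCoeff = P.coeff d := by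
  have hPne : P ≠ 0 := fun h => hc (by simp [h])
  have hnd : P.natDegree = d := le_antisymm hle (le_natDegree_of_ne_zero hc)
  exact ⟨by rw [degree_eq_natDegree hPne, hnd], by rw [leadingCoeff, hnd]⟩

lemma degree_lt_of_coeff_eq_zero' {P : Polynomial ℂ} {d : ℕ} (hle : P.natDegree ≤ d)
    (hc : P.coeff d = 0) : P.degree < (d : WithBot ℕ) := by
  rw [degree_lt_iff_coeff_zero]
  intro m hm
  have hdm : d ≤ m := by exact_mod_cast hm
  rcases eq_or_lt_of_le hdm with h | h
  · rw [← h]; exact hc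
  · exact coeff_eq_zero_of_natDegree_lt (lt_of_le_of_lt hle h)

lemma mobius_image_pair (x1 x2 : ℂ) (hx : x1 ≠ x2) (f : RatMap)
    (hC : f.criticalPoints = {(x1 : RSphere), (x2 : RSphere)}) :
    mApply 1 (-x1) 1 (-x2) '' f.criticalPoints = {((0 : ℂ) : RSphere), ∞} := by
  rw [hC, Set.image_pair, mApply_coe, mApply_coe,
    if_neg (show ¬(1 * x1 + -x2 = 0) from fun h => hx (by linear_combination h)),
    if_pos (show (1 : ℂ) * x2 + -x2 = 0 by ring),
    show (1 * x1 + -x1 : ℂ) = 0 by ring, zero_div]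

lemma mApply_std_infty (x1 x2 : ℂ) :
    mApply 1 (-x1) 1 (-x2) ∞ = ((1 : ℂ) : RSphere) := by
  rw [mApply_infty, if_neg one_ne_zero]
  norm_num

lemma mApply_std_coe {x2 z : ℂ} (x1 : ℂ) (hz : z ≠ x2) :
    mApply 1 (-x1) 1 (-x2) (z : RSphere) = (((z - x1) / (z - x2) : ℂ) : RSphere) := by
  rw [mApply_coe, if_neg (show ¬(1 * z + -x2 = 0) from fun h => hz (by linear_combination h)),
    show (1 * z + -x1 : ℂ) = z - x1 by ring, show (1 * z + -x2 : ℂ) = z - x2 by ring]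

lemma mApply_std_pole (x1 x2 : ℂ) :
    mApply 1 (-x1) 1 (-x2) ((x2 : ℂ) : RSphere) = ∞ := by
  rw [mApply_coe, if_pos (show (1 : ℂ) * x2 + -x2 = 0 by ring)]

/-- Normal form, configuration I.b: critical points `x1, x2` finite, values `v1, ∞`. -/
lemma isNormal_IB {f : RatMap} {x1 x2 v1 k1 k2 : ℂ} (hd : 2 ≤ f.degree)
    (hx : x1 ≠ x2) (hk1 : k1 ≠ 0) (hk2 : k2 ≠ 0)
    (hC : f.criticalPoints = {(x1 : RSphere), (x2 : RSphere)})
    (hE1 : f.num - C v1 * f.den = C k1 * (X - C x1) ^ f.degree)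
    (hE2 : f.den = C k2 * (X - C x2) ^ f.degree) :
    IsNormal f := by
  have hAdet : k1 * k2 - v1 * k2 * 0 ≠ 0 := by simpa using mul_ne_zero hk1 hk2
  have hBdet : (1 : ℂ) * -x2 - -x1 * 1 ≠ 0 := by
    intro h; exact hx (by linear_combination h)
  obtain ⟨hA1, hA2⟩ := mApply_inverses hAdet
  obtain ⟨hB1, hB2⟩ := mApply_inverses hBdet
  refine ⟨mApply k1 (v1 * k2) 0 k2, _, mApply 1 (-x1) 1 (-x2), _,
    ⟨k1, v1 * k2, 0, k2, hAdet, rfl⟩, ⟨1, -x1, 1, -x2, hBdet, rfl⟩,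
    hA1, hA2, hB1, hB2, ?_, mobius_image_pair x1 x2 hx f hC⟩
  rw [hE2] at hE1
  have hnum : f.num = C k1 * (X - C x1) ^ f.degree + C v1 * (C k2 * (X - C x2) ^ f.degree) := by
    linear_combination hE1
  have hcoeffn : f.num.coeff f.degree = k1 + v1 * k2 := by
    simp [hnum, coeff_C_mul, coeff_X_sub_C_pow_self]
  have hlen : f.num.natDegree ≤ f.degree := by
    rw [hnum]
    refine (natDegree_add_le _ _).trans (max_le ?_ ?_)
    · exact (natDegree_C_mul_le _ _).trans_eq (natDegree_X_sub_C_pow' _ _)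
    · refine (natDegree_C_mul_le _ _).trans ?_
      exact (natDegree_C_mul_le _ _).trans_eq (natDegree_X_sub_C_pow' _ _)
  have hdegD : f.den.degree = (f.degree : WithBot ℕ) ∧ f.den.leadingCoeff = k2 := by
    have h1 : f.den.natDegree ≤ f.degree := by
      rw [hE2]
      exact (natDegree_C_mul_le _ _).trans_eq (natDegree_X_sub_C_pow' _ _)
    have h2 : f.den.coeff f.degree = k2 := by
      simp [hE2, coeff_C_mul, coeff_X_sub_C_pow_self]
    have := degree_eq_of_coeff_ne_zero' h1 (h2 ▸ hk2)
    exact ⟨this.1, by rw [this.2, h2]⟩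
  funext z
  induction z using OnePoint.rec with
  | infty =>
    rw [comp_apply, comp_apply, mApply_std_infty, powMap_coe, one_pow,
      mApply_c0_coe k1 (v1 * k2) k2 1 hk2, mul_one, eval_infty]
    rcases eq_or_ne (k1 + v1 * k2) 0 with hδ | hδ
    · have hdn : f.num.degree < (f.degree : WithBot ℕ) := by
        exact degree_lt_of_coeff_eq_zero' hlen (by rw [hcoeffn, hδ])
      rw [if_neg (by rw [hdegD.1]; exact fun h => absurd (h.trans hdn) (lt_irrefl _)),
        if_pos (by rw [hdegD.1]; exact hdn), hδ, zero_div]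
    · have hdn := degree_eq_of_coeff_ne_zero' hlen (hcoeffn ▸ hδ)
      rw [if_neg (by rw [hdegD.1, hdn.1]; exact lt_irrefl _),
        if_neg (by rw [hdegD.1, hdn.1]; exact lt_irrefl _),
        hdegD.2, hdn.2, hcoeffn]
  | coe z =>
    rcases eq_or_ne z x2 with rfl | hz
    · rw [comp_apply, comp_apply, mApply_std_pole, powMap_infty, mApply_c0_infty, eval_coe,
        if_pos (by
          rw [hE2]
          simp only [eval_mul, eval_C, eval_pow, eval_sub, eval_X, sub_self]
          rw [zero_pow (by omega : f.degree ≠ 0), mul_zero])]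
    · have hzx2 : z - x2 ≠ 0 := sub_ne_zero.mpr hz
      have hDz : f.den.eval z = k2 * (z - x2) ^ f.degree := by rw [hE2]; simp
      have hDzne : f.den.eval z ≠ 0 := by
        rw [hDz]; exact mul_ne_zero hk2 (pow_ne_zero _ hzx2)
      have hNz : f.num.eval z = k1 * (z - x1) ^ f.degree + v1 * (k2 * (z - x2) ^ f.degree) := by
        rw [hnum]; simp
      set w := (z - x1) / (z - x2) with hw
      have hwpow : w ^ f.degree * (z - x2) ^ f.degree = (z - x1) ^ f.degree := by
        rw [hw, div_pow, div_mul_cancel₀ _ (pow_ne_zero _ hzx2)]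
      rw [comp_apply, comp_apply, mApply_std_coe x1 hz, powMap_coe, ← hw,
        mApply_c0_coe k1 (v1 * k2) k2 _ hk2, eval_coe, if_neg hDzne, OnePoint.coe_eq_coe,
        hNz, hDz, div_eq_div_iff (by rw [← hDz]; exact hDzne) hk2]
      linear_combination -k1 * k2 * hwpow
/-- Normal form, configuration I.a: critical points `x1, x2` finite, values `v1, v2` finite. -/
lemma isNormal_IA {f : RatMap} {x1 x2 v1 v2 k1 k2 : ℂ} (hd : 2 ≤ f.degree)
    (hx : x1 ≠ x2) (hv : v1 ≠ v2) (hk1 : k1 ≠ 0) (hk2 : k2 ≠ 0)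
    (hC : f.criticalPoints = {(x1 : RSphere), (x2 : RSphere)})
    (hev2 : f.eval (x2 : RSphere) = (v2 : RSphere))
    (hE1 : f.num - C v1 * f.den = C k1 * (X - C x1) ^ f.degree)
    (hE2 : f.num - C v2 * f.den = C k2 * (X - C x2) ^ f.degree) :
    IsNormal f := by
  have hsub : v2 - v1 ≠ 0 := sub_ne_zero.mpr (Ne.symm hv)
  have hAdet : v2 * k1 * -k2 - -(v1 * k2) * k1 ≠ 0 := by
    have h : v2 * k1 * -k2 - -(v1 * k2) * k1 = -(k1 * k2 * (v2 - v1)) := by ring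
    rw [h, neg_ne_zero]
    exact mul_ne_zero (mul_ne_zero hk1 hk2) hsub
  have hBdet : (1 : ℂ) * -x2 - -x1 * 1 ≠ 0 := by
    intro h; exact hx (by linear_combination h)
  obtain ⟨hA1, hA2⟩ := mApply_inverses hAdet
  obtain ⟨hB1, hB2⟩ := mApply_inverses hBdet
  refine ⟨mApply (v2 * k1) (-(v1 * k2)) k1 (-k2), _, mApply 1 (-x1) 1 (-x2), _,
    ⟨v2 * k1, -(v1 * k2), k1, -k2, hAdet, rfl⟩, ⟨1, -x1, 1, -x2, hBdet, rfl⟩,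
    hA1, hA2, hB1, hB2, ?_, mobius_image_pair x1 x2 hx f hC⟩
  have hden0 : C (v2 - v1) * f.den = C k1 * (X - C x1) ^ f.degree
      - C k2 * (X - C x2) ^ f.degree := by
    rw [C_sub]; linear_combination hE1 - hE2
  have hnum0 : C (v2 - v1) * f.num = C v2 * (C k1 * (X - C x1) ^ f.degree)
      - C v1 * (C k2 * (X - C x2) ^ f.degree) := by
    rw [C_sub]; linear_combination C v2 * hE1 - C v1 * hE2
  funext z
  induction z using OnePoint.rec with
  | infty =>
    have hcd : (v2 - v1) * f.den.coeff f.degree = k1 - k2 := by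
      have h := congrArg (fun p => Polynomial.coeff p f.degree) hden0
      simp only [coeff_C_mul, coeff_sub, coeff_X_sub_C_pow_self, mul_one] at h
      exact h
    have hcn : (v2 - v1) * f.num.coeff f.degree = v2 * k1 - v1 * k2 := by
      have h := congrArg (fun p => Polynomial.coeff p f.degree) hnum0
      simp only [coeff_C_mul, coeff_sub, coeff_X_sub_C_pow_self, mul_one] at h
      exact h
    have hled : f.den.natDegree ≤ f.degree := by
      have h1 : (C (v2 - v1) * f.den).natDegree ≤ f.degree := by
        rw [hden0]
        refine (natDegree_sub_le _ _).trans (max_le ?_ ?_) <;>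
          exact (natDegree_C_mul_le _ _).trans_eq (natDegree_X_sub_C_pow' _ _)
      rwa [natDegree_C_mul hsub] at h1
    have hlen : f.num.natDegree ≤ f.degree := by
      have h1 : (C (v2 - v1) * f.num).natDegree ≤ f.degree := by
        rw [hnum0]
        refine (natDegree_sub_le _ _).trans (max_le ?_ ?_) <;>
          refine (natDegree_C_mul_le _ _).trans
            ((natDegree_C_mul_le _ _).trans_eq (natDegree_X_sub_C_pow' _ _))
      rwa [natDegree_C_mul hsub] at h1
    have hnumle : f.num.degree ≤ (f.degree : WithBot ℕ) :=
      degree_le_natDegree.trans (by exact_mod_cast hlen)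
    rw [comp_apply, comp_apply, mApply_std_infty, powMap_coe, one_pow, mApply_coe, eval_infty]
    rcases eq_or_ne (k1 - k2) 0 with hδd | hδd
    · have hδn : v2 * k1 - v1 * k2 ≠ 0 := by
        have h : v2 * k1 - v1 * k2 = k1 * (v2 - v1) + (k1 - k2) * v1 := by ring
        rw [h, hδd, zero_mul, add_zero]
        exact mul_ne_zero hk1 hsub
      have hcd0 : f.den.coeff f.degree = 0 :=
        (mul_eq_zero.mp (hcd.trans hδd)).resolve_left hsub
      have hcnne : f.num.coeff f.degree ≠ 0 := by
        intro h; rw [h, mul_zero] at hcn; exact hδn hcn.symm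
      have hdd := degree_lt_of_coeff_eq_zero' hled hcd0
      have hdn := degree_eq_of_coeff_ne_zero' hlen hcnne
      rw [if_pos (by rw [hdn.1]; exact hdd),
        if_pos (by rw [mul_one]; linear_combination hδd)]
    · have hcdne : f.den.coeff f.degree ≠ 0 := by
        intro h; rw [h, mul_zero] at hcd; exact hδd hcd.symm
      have hdd := degree_eq_of_coeff_ne_zero' hled hcdne
      have hif1 : ¬f.den.degree < f.num.degree := by
        rw [hdd.1]; exact not_lt.mpr hnumle
      have hcondA : k1 * 1 + -k2 ≠ 0 := by
        rw [mul_one]; intro h; exact hδd (by linear_combination h)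
      rcases eq_or_ne (v2 * k1 - v1 * k2) 0 with hδn | hδn
      · have hcn0 : f.num.coeff f.degree = 0 :=
          (mul_eq_zero.mp (hcn.trans hδn)).resolve_left hsub
        have hdn := degree_lt_of_coeff_eq_zero' hlen hcn0
        rw [if_neg hif1, if_pos (by rw [hdd.1]; exact hdn), if_neg hcondA,
          OnePoint.coe_eq_coe, show v2 * k1 * 1 + -(v1 * k2) = v2 * k1 - v1 * k2 by ring, hδn,
          zero_div]
      · have hcnne : f.num.coeff f.degree ≠ 0 := by
          intro h; rw [h, mul_zero] at hcn; exact hδn hcn.symm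
        have hdn := degree_eq_of_coeff_ne_zero' hlen hcnne
        rw [if_neg hif1, if_neg (by rw [hdd.1, hdn.1]; exact lt_irrefl _), if_neg hcondA,
          OnePoint.coe_eq_coe, leadingCoeff, leadingCoeff,
          div_eq_div_iff (by rw [← leadingCoeff]; exact hcdne ∘ (hdd.2 ▸ id)) hcondA]
        have key : (v2 - v1) * (f.num.coeff f.num.natDegree * (k1 * 1 + -k2)) =
            (v2 - v1) * ((v2 * k1 * 1 + -(v1 * k2)) * f.den.coeff f.den.natDegree) := by
          have hn' : f.num.coeff f.num.natDegree = f.num.coeff f.degree := by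
            rw [← leadingCoeff, hdn.2]
          have hd' : f.den.coeff f.den.natDegree = f.den.coeff f.degree := by
            rw [← leadingCoeff, hdd.2]
          rw [hn', hd']
          linear_combination (k1 - k2) * hcn - (v2 * k1 - v1 * k2) * hcd
        have hkey := mul_left_cancel₀ hsub key
        linear_combination hkey
  | coe z =>
    rcases eq_or_ne z x2 with rfl | hz
    · rw [comp_apply, comp_apply, mApply_std_pole, powMap_infty, mApply_infty, if_neg hk1, hev2,
        OnePoint.coe_eq_coe]
      field_simp
    · have hzx2 : z - x2 ≠ 0 := sub_ne_zero.mpr hz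
      have e1 : f.num.eval z - v1 * f.den.eval z = k1 * (z - x1) ^ f.degree := by
        have := congrArg (Polynomial.eval z) hE1; simpa using this
      have e2 : f.num.eval z - v2 * f.den.eval z = k2 * (z - x2) ^ f.degree := by
        have := congrArg (Polynomial.eval z) hE2; simpa using this
      set w := (z - x1) / (z - x2) with hw
      have hwpow : w ^ f.degree * (z - x2) ^ f.degree = (z - x1) ^ f.degree := by
        rw [hw, div_pow, div_mul_cancel₀ _ (pow_ne_zero _ hzx2)]
      have hDz : (v2 - v1) * f.den.eval z = (k1 * w ^ f.degree - k2) * (z - x2) ^ f.degree := by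
        linear_combination e1 - e2 - k1 * hwpow
      have hNz : (v2 - v1) * f.num.eval z =
          (v2 * (k1 * w ^ f.degree) - v1 * k2) * (z - x2) ^ f.degree := by
        linear_combination v2 * e1 - v1 * e2 - v2 * k1 * hwpow
      have hcond : f.den.eval z = 0 ↔ k1 * w ^ f.degree + -k2 = 0 := by
        constructor
        · intro h
          rw [h, mul_zero] at hDz
          have := (mul_eq_zero.mp hDz.symm).resolve_right (pow_ne_zero _ hzx2)
          linear_combination this
        · intro h
          have h2 : k1 * w ^ f.degree - k2 = 0 := by linear_combination h
          have h' : (v2 - v1) * f.den.eval z = 0 := by rw [hDz, h2, zero_mul]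
          exact (mul_eq_zero.mp h').resolve_left hsub
      rw [comp_apply, comp_apply, mApply_std_coe x1 hz, powMap_coe, ← hw, mApply_coe, eval_coe]
      rcases eq_or_ne (f.den.eval z) 0 with h0 | h0
      · rw [if_pos h0, if_pos (hcond.mp h0)]
      · have h1 : k1 * w ^ f.degree + -k2 ≠ 0 := fun h => h0 (hcond.mpr h)
        rw [if_neg h0, if_neg h1, OnePoint.coe_eq_coe, div_eq_div_iff h0 h1]
        have key : (v2 - v1) * (f.num.eval z * (k1 * w ^ f.degree + -k2)) =
            (v2 - v1) * ((v2 * k1 * w ^ f.degree + -(v1 * k2)) * f.den.eval z) := by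
          linear_combination (k1 * w ^ f.degree + -k2) * hNz
            - (v2 * k1 * w ^ f.degree + -(v1 * k2)) * hDz
        have hkey := mul_left_cancel₀ hsub key
        linear_combination hkey
lemma critical_shape {f : RatMap} (hf : f.Bicritical) :
    (∃ x1 : ℂ, f.criticalPoints = {(x1 : RSphere), ∞}) ∨
      (∃ x1 x2 : ℂ, x1 ≠ x2 ∧ f.criticalPoints = {(x1 : RSphere), (x2 : RSphere)}) := by
  obtain ⟨c1, c2, hne, hC⟩ := Set.encard_eq_two.mp hf
  by_cases hinfty : ∞ ∈ f.criticalPoints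
  · left
    rcases (by rw [hC] at hinfty; exact hinfty : ∞ ∈ ({c1, c2} : Set RSphere)) with h | h
    · obtain ⟨x1, rfl⟩ := exists_coe_of_ne_infty
        (show c2 ≠ ∞ from fun hh => hne (by rw [← h, hh]))
      exact ⟨x1, by rw [hC, ← h, Set.pair_comm]⟩
    · rw [Set.mem_singleton_iff] at h
      obtain ⟨x1, rfl⟩ := exists_coe_of_ne_infty
        (show c1 ≠ ∞ from fun hh => hne (by rw [← h, hh]))
      exact ⟨x1, by rw [hC, ← h]⟩
  · right
    have hmem1 : c1 ∈ f.criticalPoints := by rw [hC]; exact Set.mem_insert _ _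
    have hmem2 : c2 ∈ f.criticalPoints := by rw [hC]; exact Set.mem_insert_of_mem _ rfl
    obtain ⟨x1, rfl⟩ := exists_coe_of_ne_infty (show c1 ≠ ∞ from fun hh => hinfty (hh ▸ hmem1))
    obtain ⟨x2, rfl⟩ := exists_coe_of_ne_infty (show c2 ≠ ∞ from fun hh => hinfty (hh ▸ hmem2))
    exact ⟨x1, x2, fun h => hne (by rw [h]), hC⟩

/-- Every bicritical rational map is Möbius-conjugate to a power map. -/
lemma bicritical_isNormal {f : RatMap} (hf : f.Bicritical) : IsNormal f ∧ 2 ≤ f.degree := by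
  obtain ⟨hd2, hld⟩ := bicritical_main hf
  refine ⟨?_, hd2⟩
  rcases critical_shape hf with ⟨x1, hC⟩ | ⟨x1, x2, hx, hC⟩
  · -- critical points x1, ∞
    have hmem1 : (x1 : RSphere) ∈ f.criticalPoints := by rw [hC]; exact Set.mem_insert _ _
    have hmem2 : ∞ ∈ f.criticalPoints := by rw [hC]; exact Set.mem_insert_of_mem _ rfl
    have hW : f.wron ≠ 0 := wron_ne_zero ⟨_, hmem1⟩
    have hvne : f.eval (x1 : RSphere) ≠ f.eval ∞ :=
      eval_critical_ne hf hmem1 hmem2 (OnePoint.coe_ne_infty x1)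
    obtain ⟨k1, hk1, hfp1⟩ := fiberPoly_eq_pow hW (hld _ hmem1)
    obtain ⟨k2, hk2, hfp2⟩ := fiberPoly_infty_eq_C hW (by omega) (hld _ hmem2)
    by_cases h1 : f.eval (x1 : RSphere) = ∞
    · -- x1 is a pole
      rw [h1, fiberPoly_infty] at hfp1
      obtain ⟨v2, hev2⟩ := exists_coe_of_ne_infty (show f.eval ∞ ≠ ∞ from fun hh =>
        hvne (h1.trans hh.symm))
      rw [hev2, fiberPoly_coe] at hfp2
      exact isNormal_IIC hd2 hk1 hk2 hC hev2 hfp1 hfp2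
    · obtain ⟨v1, hev1⟩ := exists_coe_of_ne_infty h1
      rw [hev1, fiberPoly_coe] at hfp1
      by_cases h2 : f.eval ∞ = ∞
      · rw [h2, fiberPoly_infty] at hfp2
        exact isNormal_IIB hk1 hk2 hC h2 hfp1 hfp2
      · obtain ⟨v2, hev2⟩ := exists_coe_of_ne_infty h2
        rw [hev2, fiberPoly_coe] at hfp2
        have hv : v1 ≠ v2 := fun h => hvne (by rw [hev1, hev2, h])
        exact isNormal_IIA hk1 hk2 hv hC hev2 hfp1 hfp2
  · -- critical points x1, x2 finite
    have hmem1 : (x1 : RSphere) ∈ f.criticalPoints := by rw [hC]; exact Set.mem_insert _ _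
    have hmem2 : (x2 : RSphere) ∈ f.criticalPoints := by rw [hC]; exact Set.mem_insert_of_mem _ rfl
    have hW : f.wron ≠ 0 := wron_ne_zero ⟨_, hmem1⟩
    have hvne : f.eval (x1 : RSphere) ≠ f.eval (x2 : RSphere) :=
      eval_critical_ne hf hmem1 hmem2 (fun h => hx (OnePoint.coe_eq_coe.mp h))
    obtain ⟨k1, hk1, hfp1⟩ := fiberPoly_eq_pow hW (hld _ hmem1)
    obtain ⟨k2, hk2, hfp2⟩ := fiberPoly_eq_pow hW (hld _ hmem2)
    by_cases h1 : f.eval (x1 : RSphere) = ∞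
    · -- x1 is a pole; use IB with roles swapped
      rw [h1, fiberPoly_infty] at hfp1
      obtain ⟨v2, hev2⟩ := exists_coe_of_ne_infty (show f.eval (x2 : RSphere) ≠ ∞ from
        fun hh => hvne (h1.trans hh.symm))
      rw [hev2, fiberPoly_coe] at hfp2
      exact isNormal_IB hd2 (Ne.symm hx) hk2 hk1 (by rw [hC, Set.pair_comm]) hfp2 hfp1
    · obtain ⟨v1, hev1⟩ := exists_coe_of_ne_infty h1
      rw [hev1, fiberPoly_coe] at hfp1
      by_cases h2 : f.eval (x2 : RSphere) = ∞
      · rw [h2, fiberPoly_infty] at hfp2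
        exact isNormal_IB hd2 hx hk1 hk2 hC hfp1 hfp2
      · obtain ⟨v2, hev2⟩ := exists_coe_of_ne_infty h2
        rw [hev2, fiberPoly_coe] at hfp2
        have hv : v1 ≠ v2 := fun h => hvne (by rw [hev1, hev2, h])
        exact isNormal_IA hd2 hx hv hk1 hk2 hC hev2 hfp1 hfp2
lemma isMobius_inv {A Ai : RSphere → RSphere} (hA : IsMobius A)
    (h1 : A ∘ Ai = id) (h2 : Ai ∘ A = id) : IsMobius Ai := by
  obtain ⟨a, b, c, d, hdet, rfl⟩ := hA
  obtain ⟨g1, g2⟩ := mApply_inverses hdet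
  have hAi : Ai = mApply d (-b) (-c) a := by
    calc Ai = id ∘ Ai := (Function.id_comp Ai).symm
    _ = (mApply d (-b) (-c) a ∘ mApply a b c d) ∘ Ai := by rw [g2]
    _ = mApply d (-b) (-c) a ∘ (mApply a b c d ∘ Ai) := by rw [Function.comp_assoc]
    _ = mApply d (-b) (-c) a := by rw [h1, Function.comp_id]
  refine ⟨d, -b, -c, a, ?_, hAi⟩
  rw [show d * a - -b * -c = a * d - b * c by ring]
  exact hdet

/-- Lifting a Möbius transformation that preserves `{0, ∞}` through the power map. -/
lemma mobius_fix_or_swap {g : RSphere → RSphere} (hg : IsMobius g)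
    (hpair : g '' {((0 : ℂ) : RSphere), ∞} = {((0 : ℂ) : RSphere), ∞}) {n : ℕ} (hn : 1 ≤ n) :
    ∃ ψ : RSphere → RSphere, IsMobius ψ ∧ g ∘ powMap n = powMap n ∘ ψ ∧
      ψ '' {((0 : ℂ) : RSphere), ∞} = {((0 : ℂ) : RSphere), ∞} := by
  obtain ⟨a, b, c, d, hdet, rfl⟩ := hg
  rw [Set.image_pair] at hpair
  have hninfty : ∞ ∈ ({mApply a b c d ((0 : ℂ) : RSphere), mApply a b c d ∞} : Set RSphere) := by
    rw [hpair]; exact Set.mem_insert_of_mem _ rfl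
  have hnzero : ((0 : ℂ) : RSphere) ∈
      ({mApply a b c d ((0 : ℂ) : RSphere), mApply a b c d ∞} : Set RSphere) := by
    rw [hpair]; exact Set.mem_insert _ _
  rcases eq_or_ne c 0 with rfl | hc
  · -- diagonal case : g fixes 0 and ∞
    have had : a ≠ 0 ∧ d ≠ 0 := by
      constructor <;> (intro h0; apply hdet; rw [h0]; ring)
    obtain ⟨ha, hd⟩ := had
    have hb : b = 0 := by
      have h0 : mApply a b 0 d ((0 : ℂ) : RSphere) ∈ ({((0:ℂ):RSphere), ∞} : Set RSphere) := by
        rw [← hpair]; exact Set.mem_insert _ _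
      rw [mApply_c0_coe a b d 0 hd] at h0
      rcases h0 with h | h
      · have h1 : (a * 0 + b) / d = 0 := OnePoint.coe_eq_coe.mp h
        rw [mul_zero, zero_add, _root_.div_eq_zero_iff] at h1
        exact h1.resolve_right hd
      · exact absurd h (OnePoint.coe_ne_infty _)
    subst hb
    obtain ⟨β, hβ⟩ := IsAlgClosed.exists_pow_nat_eq (a / d) (by omega : 0 < n)
    have hβne : β ≠ 0 := by
      intro h0
      rw [h0, zero_pow (by omega : n ≠ 0)] at hβ
      exact div_ne_zero ha hd hβ.symm
    refine ⟨mApply β 0 0 1, ⟨β, 0, 0, 1, by simpa using hβne, rfl⟩, ?_, ?_⟩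
    · funext z
      induction z using OnePoint.rec with
      | infty =>
        rw [comp_apply, comp_apply, powMap_infty, mApply_c0_infty, mApply_c0_infty, powMap_infty]
      | coe z =>
        rw [comp_apply, comp_apply, powMap_coe, mApply_c0_coe a 0 d _ hd,
          mApply_c0_coe β 0 1 z one_ne_zero, powMap_coe, OnePoint.coe_eq_coe]
        rw [add_zero, add_zero, div_one, mul_pow, hβ]
        field_simp
    · rw [Set.image_pair, mApply_c0_coe β 0 1 0 one_ne_zero, mApply_c0_infty]
      norm_num
  · rcases eq_or_ne d 0 with rfl | hd
    · -- antidiagonal case : g swaps 0 and ∞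
      have hb : b ≠ 0 := by intro h0; apply hdet; rw [h0]; ring
      have hg0 : mApply a b c 0 ((0 : ℂ) : RSphere) = ∞ := by
        rw [mApply_coe, if_pos (by ring_nf : c * 0 + 0 = 0)]
      have ha : a = 0 := by
        rcases hnzero with h | h
        · rw [hg0] at h; exact absurd h (OnePoint.coe_ne_infty _)
        · rw [Set.mem_singleton_iff, mApply_infty, if_neg hc] at h
          have := OnePoint.coe_eq_coe.mp h
          field_simp at this
          simpa using this.symm
      subst ha
      obtain ⟨β, hβ⟩ := IsAlgClosed.exists_pow_nat_eq (b / c) (by omega : 0 < n)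
      have hβne : β ≠ 0 := by
        intro h0
        rw [h0, zero_pow (by omega : n ≠ 0)] at hβ
        exact div_ne_zero hb hc hβ.symm
      refine ⟨mApply 0 β 1 0, ⟨0, β, 1, 0, by simpa using hβne, rfl⟩, ?_, ?_⟩
      · funext z
        induction z using OnePoint.rec with
        | infty =>
          rw [comp_apply, comp_apply, powMap_infty, mApply_infty, if_neg hc,
            mApply_infty, if_neg one_ne_zero]
          rw [zero_div, zero_div, powMap_coe, zero_pow (by omega : n ≠ 0)]
        | coe z =>
          rcases eq_or_ne z 0 with rfl | hz
          · rw [comp_apply, comp_apply, powMap_coe, mApply_coe,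
              if_pos (by rw [zero_pow (by omega : n ≠ 0), mul_zero, add_zero]),
              mApply_coe, if_pos (by ring_nf : (1 : ℂ) * 0 + 0 = 0), powMap_infty]
          · have hzn : z ^ n ≠ 0 := pow_ne_zero _ hz
            rw [comp_apply, comp_apply, powMap_coe, mApply_coe,
              if_neg (by rw [add_zero]; exact mul_ne_zero hc hzn),
              mApply_coe, if_neg (by rw [one_mul, add_zero]; exact hz), powMap_coe,
              OnePoint.coe_eq_coe]
            rw [zero_mul, zero_add, zero_mul, zero_add, one_mul, add_zero, add_zero,
              div_pow, hβ]
            field_simp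
      · rw [Set.image_pair, mApply_coe, if_pos (by ring_nf : (1 : ℂ) * 0 + 0 = 0),
          mApply_infty, if_neg one_ne_zero, zero_div, Set.pair_comm]
    · -- impossible : both 0 and ∞ would have finite image
      exfalso
      rcases hninfty with h | h
      · rw [mApply_coe, if_neg (by rw [mul_zero, zero_add]; exact hd)] at h
        exact OnePoint.infty_ne_coe _ h
      · rw [Set.mem_singleton_iff, mApply_infty, if_neg hc] at h
        exact OnePoint.infty_ne_coe _ h
lemma image_inv_image {T : Set RSphere} {F Fi : RSphere → RSphere} (h : Fi ∘ F = id) :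
    Fi '' (F '' T) = T := by
  rw [← Set.image_comp, h, Set.image_id]

end RatMap

open RSphere in
/-- Let `f` be a bicritical rational map of degree `d` and `μ` a Möbius transformation
with `μ(V_f) = V_f`. Then there is a Möbius transformation `φ` with `f ∘ φ = μ ∘ f` and
`φ(C_f) = C_f`. In particular, if `μ ∈ Deck(f^k)` for some `k ≥ 1`, then
`φ ∈ Deck(f^{k+1})`. -/
theorem exists_lifted_mobius (f : RatMap) (hf : f.Bicritical) (mu : RSphere → RSphere)
    (hmu : IsMobius mu) (hV : mu '' f.criticalValues = f.criticalValues) :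
    ∃ phi : RSphere → RSphere, IsMobius phi ∧ f.eval ∘ phi = mu ∘ f.eval ∧
      phi '' f.criticalPoints = f.criticalPoints ∧
      ∀ k : ℕ, 1 ≤ k → f.eval^[k] ∘ mu = f.eval^[k] → f.eval^[k + 1] ∘ phi = f.eval^[k + 1] := by
  obtain ⟨⟨A, Ai, B, Bi, hAmob, hBmob, hA1, hA2, hB1, hB2, hfac, hBC⟩, hd2⟩ :=
    RatMap.bicritical_isNormal hf
  have hpowpair : RatMap.powMap f.degree '' {((0 : ℂ) : RSphere), ∞} =
      {((0 : ℂ) : RSphere), ∞} := by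
    rw [Set.image_pair, RatMap.powMap_coe, RatMap.powMap_infty,
      zero_pow (by omega : f.degree ≠ 0)]
  have hVA : A '' ({((0 : ℂ) : RSphere), ∞} : Set RSphere) = f.criticalValues := by
    rw [RatMap.criticalValues, hfac, Set.image_comp, Set.image_comp, hBC, hpowpair]
  have hAimob : IsMobius Ai := RatMap.isMobius_inv hAmob hA1 hA2
  have hBimob : IsMobius Bi := RatMap.isMobius_inv hBmob hB1 hB2
  have hνmob : IsMobius (Ai ∘ (mu ∘ A)) := hAimob.comp (hmu.comp hAmob)
  have hνpair : (Ai ∘ (mu ∘ A)) '' {((0 : ℂ) : RSphere), ∞} = {((0 : ℂ) : RSphere), ∞} := by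
    rw [Set.image_comp, Set.image_comp, hVA, hV, ← hVA, RatMap.image_inv_image hA2]
  obtain ⟨ψ, hψmob, hψcomm, hψpair⟩ :=
    RatMap.mobius_fix_or_swap hνmob hνpair (show 1 ≤ f.degree by omega)
  refine ⟨Bi ∘ (ψ ∘ B), hBimob.comp (hψmob.comp hBmob), ?_, ?_, ?_⟩
  · -- f ∘ φ = μ ∘ f
    funext z
    have l1 : ∀ u, f.eval u = A (RatMap.powMap f.degree (B u)) := fun u => congrFun hfac u
    show f.eval (Bi (ψ (B z))) = mu (f.eval z)
    rw [l1, l1]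
    have l2 := congrFun hB1 (ψ (B z))
    simp only [comp_apply, id_eq] at l2
    rw [l2]
    have l3 := congrFun hψcomm (B z)
    simp only [comp_apply] at l3
    rw [← l3]
    have l4 := congrFun hA1 (mu (A (RatMap.powMap f.degree (B z))))
    simp only [comp_apply, id_eq] at l4
    rw [l4]
  · -- φ preserves the critical points
    rw [Set.image_comp, Set.image_comp, hBC, hψpair, ← hBC, RatMap.image_inv_image hB2]
  · -- deck group statement
    intro k hk hdeck
    have hcomm : f.eval ∘ (Bi ∘ (ψ ∘ B)) = mu ∘ f.eval := by
      funext z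
      have l1 : ∀ u, f.eval u = A (RatMap.powMap f.degree (B u)) := fun u => congrFun hfac u
      show f.eval (Bi (ψ (B z))) = mu (f.eval z)
      rw [l1, l1]
      have l2 := congrFun hB1 (ψ (B z))
      simp only [comp_apply, id_eq] at l2
      rw [l2]
      have l3 := congrFun hψcomm (B z)
      simp only [comp_apply] at l3
      rw [← l3]
      have l4 := congrFun hA1 (mu (A (RatMap.powMap f.degree (B z))))
      simp only [comp_apply, id_eq] at l4
      rw [l4]
    funext z
    have h1 : f.eval ((Bi ∘ (ψ ∘ B)) z) = mu (f.eval z) := congrFun hcomm z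
    have h2 : f.eval^[k] (mu (f.eval z)) = f.eval^[k] (f.eval z) := by
      have := congrFun hdeck (f.eval z)
      simpa using this
    rw [comp_apply, Function.iterate_succ_apply, h1, h2, ← Function.iterate_succ_apply]
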